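/- Theorem 3.1 (main theorem): Let k be a commutative ring with unit and n ≥ 0. There is an isomorphism of k-algebras φ : kC_{n+1} → I(P_n, k) between the monoid algebra of the Catalan monoid C_{n+1} over k and the incidence algebra of the poset P_n over k, given on basis elements by φ(f) = Σ_{S ∈ PCS(f)} (S, f(S)). -/

import Mathlib

/-- `X ≤ Y` in the poset `Pₙ`: writing `X = {x₁ < ⋯ < x_k}` and `Y = {y₁ < ⋯ < y_l}`,
we require `k = l` and `xᵢ ≤ yᵢ` for all `i` (encoded via `List.Forall₂` on the
sorted enumerations, which forces in particular `|X| = |Y|`). -/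
def Ple {α : Type*} [LinearOrder α] (X Y : Finset α) : Prop :=
  List.Forall₂ (· ≤ ·) (X.sort (· ≤ ·)) (Y.sort (· ≤ ·))

/-- `S` is a partial cross-section of `f : [n+1] → [n+1]`: `S ⊆ [n]`
(i.e. `n+1 ∉ S`, with `n+1` modelled as `Fin.last n`), `n+1 ∉ f(S)`, and `f`
restricted to `S` is injective. -/
def PCS {n : ℕ} (f : Fin (n+1) → Fin (n+1)) : Set (Finset (Fin (n+1))) :=
  {S | Fin.last n ∉ S ∧ Fin.last n ∉ S.image f ∧ Set.InjOn f ↑S}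

/-- The Catalan monoid `Cₙ`: the submonoid of self-maps of `[n]` (modelled as `Fin n`),
under composition (`f * g = f ∘ g`), consisting of the order-preserving, weakly
increasing maps. -/
def catalanMonoid (n : ℕ) : Submonoid (Function.End (Fin n)) where
  carrier := {f | Monotone f ∧ ∀ i, i ≤ f i}
  one_mem' := ⟨monotone_id, fun _ => le_rfl⟩
  mul_mem' := fun hf hg => ⟨hf.1.comp hg.1, fun i => le_trans (hg.2 i) (hf.2 _)⟩

/-- The poset `Pₙ` of subsets of `[n]`, viewed inside `[n+1]`: finsets of
`Fin (n+1)` avoiding the top element `Fin.last n`. -/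
abbrev Pn (n : ℕ) := {S : Finset (Fin (n+1)) // Fin.last n ∉ S}

theorem Ple.refl {α : Type*} [LinearOrder α] (X : Finset α) : Ple X X :=
  List.forall₂_same.2 fun _ _ => le_rfl

theorem forall₂_le_trans {α : Type*} [Preorder α] :
    ∀ {l₁ l₂ l₃ : List α}, List.Forall₂ (· ≤ ·) l₁ l₂ → List.Forall₂ (· ≤ ·) l₂ l₃ →
      List.Forall₂ (· ≤ ·) l₁ l₃
  | _, _, _, List.Forall₂.nil, List.Forall₂.nil => List.Forall₂.nil
  | _, _, _, List.Forall₂.cons h₁ t₁, List.Forall₂.cons h₂ t₂ =>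
      List.Forall₂.cons (le_trans h₁ h₂) (forall₂_le_trans t₁ t₂)

theorem Ple.trans {α : Type*} [LinearOrder α] {X Y Z : Finset α}
    (h₁ : Ple X Y) (h₂ : Ple Y Z) : Ple X Z :=
  forall₂_le_trans h₁ h₂

/-- The incidence algebra `I(Pₙ, k)`: the free `k`-module on the ordered pairs
`(X, Y)` with `X ≤ Y` in `Pₙ`, with product `(U,V)(X,Y) = (X,V)` if `Y = U` and `0`
otherwise.  It is realised concretely as the `k`-subalgebra of matrices `M` indexed by
`Pₙ` such that `M Y X = 0` unless `X ≤ Y`, the basis pair `(X, Y)` being the matrix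
unit `stdBasisMatrix Y X 1`; indeed `E_{V,U} • E_{Y,X} = [U = Y] • E_{V,X}`,
which is exactly the required product of `(U,V)` and `(X,Y)`. -/
noncomputable def IncAlg (n : ℕ) (k : Type*) [CommRing k] :
    Subalgebra k (Matrix (Pn n) (Pn n) k) where
  carrier := {M | ∀ X Y : Pn n, ¬ Ple X.1 Y.1 → M Y X = 0}
  zero_mem' := fun _ _ _ => rfl
  add_mem' := fun {M N} hM hN X Y h => by
    simp only [Matrix.add_apply, hM X Y h, hN X Y h, add_zero]
  one_mem' := fun X Y h => by
    rw [Matrix.one_apply]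
    split
    · next heq => exact absurd (heq ▸ Ple.refl X.1) h
    · rfl
  mul_mem' := fun {M N} hM hN X Y h => by
    rw [Matrix.mul_apply]
    refine Finset.sum_eq_zero fun Z _ => ?_
    by_cases h₁ : Ple Z.1 Y.1
    · by_cases h₂ : Ple X.1 Z.1
      · exact absurd (Ple.trans h₂ h₁) h
      · rw [hN X Z h₂, mul_zero]
    · rw [hM Z Y h₁, zero_mul]
  algebraMap_mem' := fun r X Y h => by
    rw [Matrix.algebraMap_matrix_apply]
    split
    · next heq => exact absurd (heq ▸ Ple.refl X.1) h
    · rfl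

open Classical in
/-- The pair `(S, f(S))` as an element of `Pₙ × Pₙ` (junk value if `n+1 ∈ f(S)`,
which never happens for `S ∈ PCS f`). -/
noncomputable def imageP {n : ℕ} (f : Fin (n+1) → Fin (n+1)) (P : Pn n) : Pn n :=
  if h : Fin.last n ∉ P.1.image f then ⟨P.1.image f, h⟩ else P

open Classical in
/-- `φ(f) = ∑_{S ∈ PCS(f)} (S, f(S))`, where the basis pair `(S, f(S))` of
`I(Pₙ, k)` is the matrix unit with `1` in row `f(S)`, column `S`. -/
noncomputable def phi (n : ℕ) (k : Type*) [CommRing k] (f : Fin (n+1) → Fin (n+1)) :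
    Matrix (Pn n) (Pn n) k :=
  ∑ P ∈ Finset.univ.filter (fun P : Pn n => P.1 ∈ PCS f),
    Matrix.single (imageP f P) P (1 : k)


/-!
`φ` is multiplicative because the partial cross-sections of `f ∘ g` are exactly the partial
cross-sections `S` of `g` such that `g(S)` is one of `f`.

For bijectivity, order the pairs `(X, Y)` by the weight `(|X|, ∑ X)` (lexicographically). A
Catalan map `f` has a maximal partial cross-section `X_f`, made of the largest point of each
fibre not over `n+1`, and every other partial cross-section of `f` has smaller weight: it has
fewer points, or as many with the same image, and then it lies pointwise below `X_f`. Moreover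
`f ↦ (X_f, f(X_f))` is a bijection from `C_{n+1}` onto the pairs `X ≤ Y` of `Pₙ`, with inverse
`(X, Y) ↦ (j ↦ min ({yᵢ | j ≤ xᵢ} ∪ {n+1}))`. So the matrix of `φ` in the two bases is
unitriangular.
-/

section Unitriangular

open Submodule

variable {k G m n β : Type*} [CommRing k] [LinearOrder β]
  {v : G → Matrix m n k} {θ : G → m × n} {w : m × n → β}

theorem linearIndependent_of_unitriangular (hθ : θ.Injective)
    (hdiag : ∀ g, v g (θ g).1 (θ g).2 = 1)
    (htri : ∀ g i j, v g i j ≠ 0 → (i, j) = θ g ∨ w (i, j) < w (θ g)) :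
    LinearIndependent k v := by
  classical
  rw [linearIndependent_iff']
  intro s c hsum
  by_contra! hne
  obtain ⟨g, hg, hgmax⟩ := (s.filter (c · ≠ 0)).exists_max_image (fun g => w (θ g))
    (by simpa [Finset.Nonempty] using hne)
  rw [Finset.mem_filter] at hg
  have hentry := congrFun (congrFun hsum (θ g).1) (θ g).2
  simp only [Matrix.sum_apply, Matrix.smul_apply, smul_eq_mul, Matrix.zero_apply] at hentry
  rw [Finset.sum_eq_single_of_mem g hg.1, hdiag, mul_one] at hentry
  · exact hg.2 hentry
  intro g' hg' hne'
  by_contra hterm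
  rcases htri g' _ _ (right_ne_zero_of_mul hterm) with heq | hlt
  · exact hne' (hθ heq).symm
  · exact (hgmax g' (Finset.mem_filter.2 ⟨hg', left_ne_zero_of_mul hterm⟩)).not_gt hlt

variable [Fintype m] [Fintype n] [DecidableEq m] [DecidableEq n]

theorem Matrix.mem_span_single_of_support_subset {M : Matrix m n k} {T : Set (m × n)}
    (hM : ∀ i j, M i j ≠ 0 → (i, j) ∈ T) :
    M ∈ span k ((fun p => Matrix.single p.1 p.2 1) '' T) := by
  rw [Matrix.matrix_eq_sum_single M]
  refine sum_mem fun i _ => sum_mem fun j _ => ?_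
  by_cases hij : M i j = 0
  · rw [hij, Matrix.single_zero]
    exact zero_mem _
  · rw [← mul_one (M i j), ← smul_eq_mul, ← Matrix.smul_single]
    exact smul_mem _ _ (subset_span ⟨(i, j), hM i j hij, rfl⟩)

theorem span_range_eq_of_unitriangular [WellFoundedLT β]
    (hdiag : ∀ g, v g (θ g).1 (θ g).2 = 1)
    (htri : ∀ g i j, v g i j ≠ 0 → (i, j) = θ g ∨ w (i, j) < w (θ g))
    (hsupp : ∀ g i j, v g i j ≠ 0 → (i, j) ∈ Set.range θ) :
    span k (Set.range v) = span k ((fun p => Matrix.single p.1 p.2 1) '' Set.range θ) := by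
  refine le_antisymm (span_le.2 ?_) (span_le.2 ?_)
  · rintro _ ⟨g, rfl⟩
    exact Matrix.mem_span_single_of_support_subset (hsupp g)
  rintro _ ⟨_, ⟨g, rfl⟩, rfl⟩
  induction g using (InvImage.wf (fun g => w (θ g)) wellFounded_lt).induction with
  | _ g ih =>
  -- `v g` minus its leading entry is supported at positions of smaller weight
  set N := v g - Matrix.single (θ g).1 (θ g).2 1
  have hN : N ∈ span k ((fun p => Matrix.single p.1 p.2 1) ''
      (θ '' {g' | w (θ g') < w (θ g)})) := by
    refine Matrix.mem_span_single_of_support_subset fun i j hij => ?_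
    have hpos : (i, j) ≠ θ g := by
      rintro hpos
      simp only [Prod.ext_iff] at hpos
      obtain ⟨rfl, rfl⟩ := hpos
      simp [N, hdiag] at hij
    have hv : v g i j ≠ 0 := by
      have hsingle : Matrix.single (θ g).1 (θ g).2 (1 : k) i j = 0 :=
        Matrix.single_apply_of_ne _ _ _ _ _ fun h => hpos (Prod.ext h.1.symm h.2.symm)
      simpa [N, hsingle] using hij
    obtain ⟨g', hg'⟩ := hsupp g i j hv
    refine ⟨g', ?_, hg'⟩
    rw [Set.mem_ofPred_eq, hg']
    exact (htri g i j hv).resolve_left hpos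
  have hle : span k ((fun p => Matrix.single p.1 p.2 1) ''
      (θ '' {g' | w (θ g') < w (θ g)})) ≤ span k (Set.range v) := by
    rw [span_le]
    rintro _ ⟨_, ⟨g', hg', rfl⟩, rfl⟩
    exact ih g' hg'
  simpa [N] using sub_mem (subset_span (Set.mem_range_self g)) (hle hN)

end Unitriangular

section SortedEnumeration

variable {α β : Type*} [LinearOrder α] [LinearOrder β]

theorem Finset.comp_orderEmbOfFin_of_strictMonoOn [DecidableEq β] {f : α → β} {S : Finset α}
    {T : Finset β} (hf : StrictMonoOn f S) (hST : S.image f = T) {m : ℕ} (hS : S.card = m)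
    (hT : T.card = m) : f ∘ S.orderEmbOfFin hS = T.orderEmbOfFin hT :=
  orderEmbOfFin_unique hT (fun i => hST ▸ mem_image_of_mem f (S.orderEmbOfFin_mem hS i))
    fun _ _ hab => hf (S.orderEmbOfFin_mem hS _) (S.orderEmbOfFin_mem hS _)
      ((S.orderEmbOfFin hS).strictMono hab)

theorem ple_iff_forall_orderEmbOfFin {X Y : Finset α} {m : ℕ} (hX : X.card = m) :
    Ple X Y ↔ ∃ hY : Y.card = m, ∀ i, X.orderEmbOfFin hX i ≤ Y.orderEmbOfFin hY i := by
  simp only [Ple, List.forall₂_iff_get, Finset.length_sort, Finset.orderEmbOfFin_apply]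
  constructor
  · rintro ⟨hcard, hle⟩
    exact ⟨hcard ▸ hX, fun i => hle i (by simp [hX]) (by simp [← hcard, hX])⟩
  · rintro ⟨hY, hle⟩
    exact ⟨hX.trans hY.symm, fun i h₁ h₂ => hle ⟨i, hX ▸ h₁⟩⟩

end SortedEnumeration

section CatalanMaps

open Finset

variable {n : ℕ} {f : Fin (n+1) → Fin (n+1)} {S : Finset (Fin (n+1))}

open Classical in
noncomputable def maxSec (f : Fin (n+1) → Fin (n+1)) : Finset (Fin (n+1)) :=
  {i | f i ≠ Fin.last n ∧ ∀ j, f j = f i → j ≤ i}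

theorem mem_maxSec {i : Fin (n+1)} :
    i ∈ maxSec f ↔ f i ≠ Fin.last n ∧ ∀ j, f j = f i → j ≤ i := by
  simp [maxSec]

theorem last_notMem_maxSec (hf : ∀ i, i ≤ f i) : Fin.last n ∉ maxSec f := fun h =>
  (mem_maxSec.1 h).1 (le_antisymm (Fin.le_last _) (hf _))

theorem maxSec_mem_PCS (hf : ∀ i, i ≤ f i) : maxSec f ∈ PCS f := by
  refine ⟨last_notMem_maxSec hf, ?_, fun a ha b hb hab => ?_⟩
  · rw [mem_image]
    rintro ⟨x, hx, hfx⟩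
    exact (mem_maxSec.1 hx).1 hfx
  · exact le_antisymm ((mem_maxSec.1 hb).2 a hab) ((mem_maxSec.1 ha).2 b hab.symm)

theorem exists_mem_maxSec {i : Fin (n+1)} (hi : f i ≠ Fin.last n) :
    ∃ x ∈ maxSec f, i ≤ x ∧ f x = f i := by
  classical
  have hne : ({j | f j = f i} : Finset (Fin (n+1))).Nonempty := ⟨i, by simp⟩
  obtain ⟨x, hx, hmax⟩ := exists_max_image _ id hne
  rw [mem_filter] at hx
  refine ⟨x, mem_maxSec.2 ⟨hx.2 ▸ hi, fun j hj => hmax j ?_⟩, hmax i (by simp), hx.2⟩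
  simp [hj, hx.2]

theorem image_subset_image_maxSec (hS : Fin.last n ∉ S.image f) :
    S.image f ⊆ (maxSec f).image f := by
  rintro _ hy
  obtain ⟨s, hs, rfl⟩ := mem_image.1 hy
  obtain ⟨x, hx, -, hfx⟩ := exists_mem_maxSec fun h => hS (mem_image.2 ⟨s, hs, h⟩)
  exact mem_image.2 ⟨x, hx, hfx⟩

theorem card_le_card_maxSec (hS : S ∈ PCS f) : S.card ≤ (maxSec f).card :=
  calc S.card = (S.image f).card := (card_image_of_injOn hS.2.2).symm
    _ ≤ ((maxSec f).image f).card := card_le_card (image_subset_image_maxSec hS.2.1)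
    _ ≤ (maxSec f).card := card_image_le

def weight (X : Finset (Fin (n+1))) : ℕ ×ₗ ℕ :=
  toLex (X.card, ∑ x ∈ X, (x : ℕ))

theorem sum_val_eq_sum_orderEmbOfFin (X : Finset (Fin (n+1))) {m : ℕ} (hX : X.card = m) :
    ∑ x ∈ X, (x : ℕ) = ∑ i, (X.orderEmbOfFin hX i : ℕ) := by
  conv_lhs => rw [← X.map_orderEmbOfFin_univ hX, sum_map]
  rfl

theorem eq_maxSec_or_weight_lt (hf : Monotone f) (hf' : ∀ i, i ≤ f i) (hS : S ∈ PCS f) :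
    S = maxSec f ∨ weight S < weight (maxSec f) := by
  classical
  set M := maxSec f
  have hM : M ∈ PCS f := maxSec_mem_PCS hf'
  rcases (card_le_card_maxSec hS).lt_or_eq with hlt | hcard
  · exact Or.inr (Prod.Lex.toLex_lt_toLex.2 (Or.inl hlt))
  have hYM : (M.image f).card = M.card := card_image_of_injOn hM.2.2
  have him : S.image f = M.image f := eq_of_subset_of_card_le
    (image_subset_image_maxSec hS.2.1) (by rw [hYM, card_image_of_injOn hS.2.2, hcard])
  set eS := S.orderEmbOfFin hcard
  set eM := M.orderEmbOfFin rfl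
  -- both `f ∘ eS` and `f ∘ eM` enumerate the common image of `S` and `M` increasingly
  have hcomp : ∀ i, f (eS i) = f (eM i) := fun i =>
    (congrFun (comp_orderEmbOfFin_of_strictMonoOn
        ((hf.monotoneOn _).strictMonoOn_of_injOn hS.2.2) him hcard hYM) i).trans
      (congrFun (comp_orderEmbOfFin_of_strictMonoOn
        ((hf.monotoneOn _).strictMonoOn_of_injOn hM.2.2) rfl rfl hYM) i).symm
  have hle : ∀ i, eS i ≤ eM i := fun i =>
    (mem_maxSec.1 (M.orderEmbOfFin_mem rfl i)).2 _ (hcomp i)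
  by_cases heq : ∀ i, eS i = eM i
  · left
    rw [← S.image_orderEmbOfFin_univ hcard, ← M.image_orderEmbOfFin_univ rfl]
    exact image_congr fun i _ => heq i
  · right
    obtain ⟨i, hi⟩ := not_forall.1 heq
    refine Prod.Lex.toLex_lt_toLex.2 (Or.inr ⟨hcard, ?_⟩)
    rw [sum_val_eq_sum_orderEmbOfFin S hcard, sum_val_eq_sum_orderEmbOfFin M rfl]
    exact sum_lt_sum (fun i _ => Fin.le_def.1 (hle i))
      ⟨i, mem_univ i, Fin.lt_def.1 ((hle i).lt_of_ne hi)⟩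

theorem ple_image (hf : Monotone f) (hf' : ∀ i, i ≤ f i) (hinj : Set.InjOn f S) :
    Ple S (S.image f) := by
  classical
  refine (ple_iff_forall_orderEmbOfFin rfl).2 ⟨card_image_of_injOn hinj, fun i => ?_⟩
  rw [← comp_orderEmbOfFin_of_strictMonoOn ((hf.monotoneOn _).strictMonoOn_of_injOn hinj) rfl]
  exact hf' _

end CatalanMaps

section MinExtend

open Finset

variable {n m : ℕ} {e e' : Fin m → Fin (n+1)}

def minExtend (e e' : Fin m → Fin (n+1)) (j : Fin (n+1)) : Fin (n+1) :=
  ({i | j ≤ e i} : Finset (Fin m)).inf e'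

theorem minExtend_monotone : Monotone (minExtend e e') := fun _ _ hab =>
  inf_mono fun _ hi => mem_filter.2 ⟨mem_univ _, hab.trans (mem_filter.1 hi).2⟩

theorem le_minExtend (h : ∀ i, e i ≤ e' i) (j : Fin (n+1)) : j ≤ minExtend e e' j :=
  Finset.le_inf fun i hi => (mem_filter.1 hi).2.trans (h i)

theorem minExtend_apply (he : StrictMono e) (he' : Monotone e') (i : Fin m) :
    minExtend e e' (e i) = e' i :=
  le_antisymm (Finset.inf_le (by simp))
    (Finset.le_inf fun _ hi => he' (he.le_iff_le.1 (mem_filter.1 hi).2))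

theorem maxSec_minExtend (he : StrictMono e) (he' : StrictMono e')
    (hlast : ∀ i, e' i ≠ Fin.last n) : maxSec (minExtend e e') = univ.image e := by
  ext x
  rw [mem_maxSec, mem_image]
  constructor
  · rintro ⟨hx, hmax⟩
    have hne : ({i | x ≤ e i} : Finset (Fin m)).Nonempty := by
      by_contra hempty
      rw [not_nonempty_iff_eq_empty] at hempty
      exact hx (by rw [minExtend, hempty, inf_empty, Fin.top_eq_last])
    obtain ⟨i, hi, hxi⟩ := exists_mem_eq_inf _ hne e'
    have hle : e i ≤ x := hmax _ ((minExtend_apply he he'.monotone i).trans hxi.symm)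
    exact ⟨i, mem_univ i, hle.antisymm (mem_filter.1 hi).2⟩
  · rintro ⟨i, -, rfl⟩
    rw [minExtend_apply he he'.monotone]
    refine ⟨hlast i, fun j hj => not_lt.1 fun hij => ?_⟩
    have hlt : e' i < minExtend e e' j :=
      (Finset.lt_inf_iff (Fin.top_eq_last n ▸ Fin.lt_last_iff_ne_last.2 (hlast i))).2
        fun i' hi' => he' (he.lt_iff_lt.1 (hij.trans_le (mem_filter.1 hi').2))
    exact hlt.ne' hj

variable {f : Fin (n+1) → Fin (n+1)} {X : Finset (Fin (n+1))}

theorem eq_minExtend_maxSec (hf : Monotone f) (hX : maxSec f = X) (hm : X.card = m) :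
    f = minExtend (X.orderEmbOfFin hm) (f ∘ X.orderEmbOfFin hm) := by
  subst hX
  funext j
  refine le_antisymm (Finset.le_inf fun i hi => hf (mem_filter.1 hi).2) ?_
  by_cases hj : f j = Fin.last n
  · exact hj ▸ Fin.top_eq_last n ▸ le_top
  obtain ⟨x, hx, hjx, hfx⟩ := exists_mem_maxSec hj
  obtain ⟨i, rfl⟩ : x ∈ Set.range ((maxSec f).orderEmbOfFin hm) := by simpa using hx
  exact hfx ▸ Finset.inf_le (mem_filter.2 ⟨mem_univ i, hjx⟩)

end MinExtend

section LeadingPair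

open Finset

variable {n : ℕ}

theorem imageP_val {f : Fin (n+1) → Fin (n+1)} {X : Pn n} (h : Fin.last n ∉ X.1.image f) :
    (imageP f X).1 = X.1.image f := by
  rw [imageP, dif_pos h]

noncomputable def leadingPair (f : catalanMonoid (n+1)) : Pn n × Pn n :=
  let X : Pn n := ⟨maxSec f.1, last_notMem_maxSec f.2.2⟩
  (imageP f.1 X, X)

theorem leadingPair_snd_val (f : catalanMonoid (n+1)) : (leadingPair f).2.1 = maxSec f.1 := rfl

theorem leadingPair_fst_val (f : catalanMonoid (n+1)) :
    (leadingPair f).1.1 = (maxSec f.1).image f.1 :=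
  imageP_val (maxSec_mem_PCS f.2.2).2.1

theorem strictMonoOn_maxSec (f : catalanMonoid (n+1)) : StrictMonoOn f.1 (maxSec f.1) :=
  (f.2.1.monotoneOn _).strictMonoOn_of_injOn (maxSec_mem_PCS f.2.2).2.2

theorem leadingPair_injective : Function.Injective (leadingPair (n := n)) := by
  intro f g h
  have hX : maxSec f.1 = maxSec g.1 := congrArg (fun p => p.2.1) h
  have hY : (maxSec f.1).image g.1 = (maxSec f.1).image f.1 := by
    have := congrArg (fun p => p.1.1) h
    simp only [leadingPair_fst_val] at this
    rw [this, hX]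
  set X := maxSec f.1
  set e := X.orderEmbOfFin rfl
  have hcard : (X.image f.1).card = X.card := card_image_of_injOn (maxSec_mem_PCS f.2.2).2.2
  have hcomp : f.1 ∘ e = g.1 ∘ e :=
    (comp_orderEmbOfFin_of_strictMonoOn (strictMonoOn_maxSec f) rfl rfl hcard).trans
      (comp_orderEmbOfFin_of_strictMonoOn (hX ▸ strictMonoOn_maxSec g) hY rfl hcard).symm
  have hf : (f.1 : Fin (n+1) → Fin (n+1)) = minExtend e (f.1 ∘ e) :=
    eq_minExtend_maxSec f.2.1 rfl rfl
  have hg : (g.1 : Fin (n+1) → Fin (n+1)) = minExtend e (g.1 ∘ e) :=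
    eq_minExtend_maxSec g.2.1 hX.symm rfl
  exact Subtype.ext (hf.trans (hcomp ▸ hg.symm))

theorem range_leadingPair :
    Set.range (leadingPair (n := n)) = {p | Ple p.2.1 p.1.1} := by
  ext ⟨Y, X⟩
  constructor
  · rintro ⟨f, hf⟩
    rw [← hf, Set.mem_ofPred_eq, leadingPair_fst_val, leadingPair_snd_val]
    exact ple_image f.2.1 f.2.2 (maxSec_mem_PCS f.2.2).2.2
  · intro hXY
    obtain ⟨hY, hle⟩ := (ple_iff_forall_orderEmbOfFin rfl).1 hXY
    set eX := X.1.orderEmbOfFin rfl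
    set eY := Y.1.orderEmbOfFin hY
    let F : catalanMonoid (n+1) := ⟨minExtend eX eY, minExtend_monotone, le_minExtend hle⟩
    have hlast : ∀ i, eY i ≠ Fin.last n := fun i h =>
      Y.2 (h ▸ Y.1.orderEmbOfFin_mem hY i :)
    have hmax : maxSec F.1 = X.1 :=
      (maxSec_minExtend eX.strictMono eY.strictMono hlast).trans
        (X.1.image_orderEmbOfFin_univ rfl)
    have himage : X.1.image F.1 = Y.1 :=
      calc X.1.image F.1 = (univ.image eX).image F.1 := by
            rw [X.1.image_orderEmbOfFin_univ rfl]
        _ = univ.image eY := by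
          rw [image_image]
          exact image_congr fun i _ => minExtend_apply eX.strictMono eY.monotone i
        _ = Y.1 := Y.1.image_orderEmbOfFin_univ hY
    refine ⟨F, Prod.ext (Subtype.ext ?_) (Subtype.ext hmax)⟩
    rw [leadingPair_fst_val, hmax, himage]

end LeadingPair

section Phi

open Finset Submodule

variable {n : ℕ} {k : Type*} [CommRing k]

open Classical in
theorem phi_apply (f : Fin (n+1) → Fin (n+1)) (X Y : Pn n) :
    phi n k f Y X = if X.1 ∈ PCS f ∧ imageP f X = Y then 1 else 0 := by
  rw [phi, Matrix.sum_apply]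
  by_cases hX : X.1 ∈ PCS f
  · rw [sum_eq_single_of_mem X (by simp [hX])
      (fun P _ hP => Matrix.single_apply_of_ne _ _ _ _ _ fun h => hP h.2)]
    by_cases hY : imageP f X = Y
    · rw [if_pos ⟨hX, hY⟩, hY, Matrix.single_apply_same]
    · rw [if_neg (fun h => hY h.2)]
      exact Matrix.single_apply_of_ne _ _ _ _ _ fun h => hY h.1
  · rw [if_neg (fun h => hX h.1)]
    refine sum_eq_zero fun P hP => Matrix.single_apply_of_ne _ _ _ _ _ fun h => ?_
    exact hX (h.2 ▸ (mem_filter.1 hP).2)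

theorem mem_PCS_of_phi_apply_ne_zero {f : Fin (n+1) → Fin (n+1)} {X Y : Pn n}
    (h : phi n k f Y X ≠ 0) : X.1 ∈ PCS f ∧ imageP f X = Y := by
  classical
  by_contra hc
  exact h (by rw [phi_apply, if_neg hc])

theorem phi_apply_leadingPair (f : catalanMonoid (n+1)) :
    phi n k f.1 (leadingPair f).1 (leadingPair f).2 = 1 := by
  classical
  exact (phi_apply f.1 _ _).trans (if_pos ⟨maxSec_mem_PCS f.2.2, rfl⟩)

theorem eq_leadingPair_or_weight_lt (f : catalanMonoid (n+1)) {X Y : Pn n}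
    (h : phi n k f.1 Y X ≠ 0) :
    (Y, X) = leadingPair f ∨ weight X.1 < weight (leadingPair f).2.1 := by
  obtain ⟨hX, rfl⟩ := mem_PCS_of_phi_apply_ne_zero h
  refine (eq_maxSec_or_weight_lt f.2.1 f.2.2 hX).imp_left fun hmax => ?_
  obtain rfl : X = (leadingPair f).2 := Subtype.ext hmax
  rfl

theorem mem_range_leadingPair_of_phi_apply_ne_zero (f : catalanMonoid (n+1)) {X Y : Pn n}
    (h : phi n k f.1 Y X ≠ 0) : (Y, X) ∈ Set.range leadingPair := by
  obtain ⟨hX, rfl⟩ := mem_PCS_of_phi_apply_ne_zero h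
  rw [range_leadingPair, Set.mem_ofPred_eq, imageP_val hX.2.1]
  exact ple_image f.2.1 f.2.2 hX.2.2

theorem linearIndependent_phi :
    LinearIndependent k fun f : catalanMonoid (n+1) => phi n k f.1 :=
  linearIndependent_of_unitriangular (w := fun p => weight p.2.1) leadingPair_injective
    phi_apply_leadingPair fun f _ _ h => eq_leadingPair_or_weight_lt f h

theorem toSubmodule_incAlg : Subalgebra.toSubmodule (IncAlg n k) =
    span k ((fun p => Matrix.single p.1 p.2 1) '' {p : Pn n × Pn n | Ple p.2.1 p.1.1}) := by
  refine le_antisymm (fun M hM => ?_) (span_le.2 ?_)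
  · exact Matrix.mem_span_single_of_support_subset fun Y X h =>
      not_not.1 fun hXY => h (hM X Y hXY)
  · rintro _ ⟨⟨Y, X⟩, hXY, rfl⟩ X' Y' hX'Y'
    exact Matrix.single_apply_of_ne _ _ _ _ _ fun h => hX'Y' (h.1 ▸ h.2 ▸ hXY)

theorem span_range_phi :
    span k (Set.range fun f : catalanMonoid (n+1) => phi n k f.1) =
      Subalgebra.toSubmodule (IncAlg n k) := by
  rw [span_range_eq_of_unitriangular (w := fun p => weight p.2.1) phi_apply_leadingPair
    (fun f _ _ h => eq_leadingPair_or_weight_lt f h)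
    (fun f _ _ h => mem_range_leadingPair_of_phi_apply_ne_zero f h),
    range_leadingPair, toSubmodule_incAlg]

end Phi

section Multiplicativity

open Finset

variable {n : ℕ} {k : Type*} [CommRing k]

theorem phi_id : phi n k id = 1 := by
  classical
  ext Y X
  have hlast : Fin.last n ∉ X.1.image id := by simpa using X.2
  have hX : X.1 ∈ PCS id := ⟨X.2, hlast, Set.injOn_id _⟩
  have him : imageP id X = X := Subtype.ext (by rw [imageP_val hlast, image_id])
  rw [phi_apply, Matrix.one_apply]
  simp [hX, him, eq_comm]

theorem mem_PCS_comp_iff {f g : Fin (n+1) → Fin (n+1)} (hf : f (Fin.last n) = Fin.last n)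
    {S : Finset (Fin (n+1))} (hS : Fin.last n ∉ S) :
    S ∈ PCS (f ∘ g) ↔ S ∈ PCS g ∧ S.image g ∈ PCS f := by
  classical
  simp only [PCS, Set.mem_ofPred_eq, image_image, coe_image]
  constructor
  · rintro ⟨-, hfg, hinj⟩
    have hg : Fin.last n ∉ S.image g := fun h => by
      obtain ⟨s, hs, hgs⟩ := mem_image.1 h
      exact hfg (mem_image.2 ⟨s, hs, by simp [hgs, hf]⟩)
    refine ⟨⟨hS, hg, hinj.of_comp⟩, hg, hfg, ?_⟩
    rintro _ ⟨a, ha, rfl⟩ _ ⟨b, hb, rfl⟩ hab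
    rw [hinj ha hb hab]
  · rintro ⟨⟨-, -, hginj⟩, -, hfg, hfinj⟩
    exact ⟨hS, hfg, hfinj.comp hginj (Set.mapsTo_image g S)⟩

theorem imageP_comp {f g : Fin (n+1) → Fin (n+1)} {X : Pn n}
    (hg : X.1 ∈ PCS g) (hf : X.1.image g ∈ PCS f) :
    imageP (f ∘ g) X = imageP f (imageP g X) := by
  have hgX : (imageP g X).1 = X.1.image g := imageP_val hg.2.1
  have hfX : Fin.last n ∉ (imageP g X).1.image f := by rw [hgX]; exact hf.2.1
  have hfgX : Fin.last n ∉ X.1.image (f ∘ g) := by rw [← image_image]; exact hf.2.1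
  apply Subtype.ext
  rw [imageP_val hfgX, imageP_val hfX, hgX, image_image]

theorem phi_comp {f g : Fin (n+1) → Fin (n+1)} (hf : f (Fin.last n) = Fin.last n) :
    phi n k (f ∘ g) = phi n k f * phi n k g := by
  classical
  ext Y X
  rw [Matrix.mul_apply, sum_eq_single_of_mem (imageP g X) (mem_univ _)
    fun Z _ hZ => by rw [phi_apply g X Z, if_neg fun h => hZ h.2.symm, mul_zero]]
  simp only [phi_apply, mem_PCS_comp_iff hf X.2]
  by_cases hg : X.1 ∈ PCS g
  · rw [imageP_val hg.2.1]
    by_cases hf' : X.1.image g ∈ PCS f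
    · have hgX : imageP g X = ⟨X.1.image g, hf'.1⟩ := Subtype.ext (imageP_val hg.2.1)
      simp [hg, hf', imageP_comp hg hf', hgX]
    · simp [hf']
  · simp [hg]

noncomputable def phiHom (n : ℕ) (k : Type*) [CommRing k] :
    catalanMonoid (n+1) →* Matrix (Pn n) (Pn n) k where
  toFun f := phi n k f.1
  map_one' := phi_id
  map_mul' f _ := phi_comp (le_antisymm (Fin.le_last _) (f.2.2 _))

end Multiplicativity

/-- Theorem 3.1: there is an isomorphism of `k`-algebras
`φ : kC_{n+1} → I(Pₙ, k)` with `φ(f) = ∑_{S ∈ PCS(f)} (S, f(S))` for every basis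
element `f ∈ C_{n+1}`. -/
theorem catalan_algebra_iso (n : ℕ) (k : Type*) [CommRing k] :
    ∃ φ : MonoidAlgebra k (catalanMonoid (n+1)) ≃ₐ[k] IncAlg n k,
      ∀ f : catalanMonoid (n+1),
        (φ (MonoidAlgebra.of k (catalanMonoid (n+1)) f) : Matrix (Pn n) (Pn n) k) =
          phi n k f.1 := by
  let Φ := MonoidAlgebra.lift k (Matrix (Pn n) (Pn n) k) (catalanMonoid (n+1)) (phiHom n k)
  let b := MonoidAlgebra.basis (catalanMonoid (n+1)) k
  have hΦ : b.constr k (fun f => phi n k f.1) = Φ.toLinearMap :=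
    b.constr_eq k fun f => by simp [b, Φ, MonoidAlgebra.lift_single, phiHom]
  have hinj : Function.Injective Φ := by
    simpa [hΦ] using b.injective_constr_of_linearIndependent (R₂ := k) linearIndependent_phi
  have hrange : Φ.range = IncAlg n k := by
    apply Subalgebra.toSubmodule_injective
    rw [← span_range_phi, ← b.constr_range k, hΦ]
    rfl
  exact ⟨(AlgEquiv.ofInjective Φ hinj).trans (Subalgebra.equivOfEq _ _ hrange),
    fun f => MonoidAlgebra.lift_of _ f⟩
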